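/- arXiv:1402.0092 — 4 statements merged into one kernel-verified Lean document; each statement's English description precedes it below -/
import Mathlib

section
/- Let W₁ be negative binomial with parameters (p, ℓ), counting failures before the ℓ-th success: P(W₁ = k) = (ℓ(ℓ+1)⋯(ℓ+k−1)/k!)·p^ℓ·(1−p)^k, with mean μ = ℓ(1−p)/p. Regarding P(W₁ = k) as a function of μ (with ℓ fixed and p = ℓ/(μ+ℓ)), its derivative with respect to μ equals P(W₂ = k−1) − P(W₂ = k), where W₂ is negative binomial with parameters (p, ℓ+1). -/
/-!
In the probability `p` one has `d/dp P(W₁ = k) = (ℓ/p²)(P(W₂ = k) − P(W₂ = k−1))`: differentiate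
`p^ℓ (1−p)^k` and absorb the factors `ℓ + k` and `k` into the coefficients through
`ℓ·(ℓ+1)^(k̄)/k! = (ℓ+k)·ℓ^(k̄)/k! = (k+1)·ℓ^(k+1̄)/(k+1)!`.
Since `dp/dμ = −ℓ/(μ+ℓ)² = −p²/ℓ`, the chain rule gives the claim.
-/

open Finset

/-- Point probability of the negative binomial distribution `nb(ℓ, p)`:
`P(W = k) = (ℓ(ℓ+1)⋯(ℓ+k−1)/k!)·p^ℓ·(1−p)^k` (rising factorial, real exponent `ℓ`). -/
noncomputable def nbPt (l p : ℝ) (k : ℕ) : ℝ :=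
  (∏ i ∈ range k, (l + i)) / (k.factorial : ℝ) * p ^ l * (1 - p) ^ k

noncomputable def nbCoeff (l : ℝ) (k : ℕ) : ℝ :=
  (∏ i ∈ range k, (l + i)) / (k.factorial : ℝ)

lemma nbPt_eq_nbCoeff_mul (l p : ℝ) (k : ℕ) : nbPt l p k = nbCoeff l k * p ^ l * (1 - p) ^ k := rfl

lemma nbCoeff_zero (l : ℝ) : nbCoeff l 0 = 1 := by simp [nbCoeff]

lemma mul_prod_range_add_one_add (l : ℝ) (k : ℕ) :
    l * ∏ i ∈ range k, (l + 1 + i) = ∏ i ∈ range (k + 1), (l + i) := by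
  rw [prod_range_succ', mul_comm]
  push_cast
  simp only [add_zero, add_assoc, add_comm (1 : ℝ)]

lemma mul_nbCoeff_add_one_eq_add_mul (l : ℝ) (k : ℕ) :
    l * nbCoeff (l + 1) k = (l + k) * nbCoeff l k := by
  simp only [nbCoeff, ← mul_div_assoc, mul_prod_range_add_one_add, prod_range_succ]
  ring

lemma mul_nbCoeff_add_one_eq_succ_mul (l : ℝ) (k : ℕ) :
    l * nbCoeff (l + 1) k = (k + 1) * nbCoeff l (k + 1) := by
  simp only [nbCoeff, ← mul_div_assoc, mul_prod_range_add_one_add, Nat.factorial_succ]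
  push_cast
  field_simp

theorem hasDerivAt_nbPt (l : ℝ) {p : ℝ} (hp : 0 < p) (k : ℕ) :
    HasDerivAt (fun p => nbPt l p k)
      (l / p ^ 2 * (nbPt (l + 1) p k - if k = 0 then 0 else nbPt (l + 1) p (k - 1))) p := by
  have hpow : HasDerivAt (fun p : ℝ => (1 - p) ^ k) (k * (1 - p) ^ (k - 1) * (0 - 1)) p :=
    ((hasDerivAt_const p 1).sub (hasDerivAt_id p)).pow k
  refine (((Real.hasDerivAt_rpow_const (p := l) (Or.inl hp.ne')).const_mul (nbCoeff l k)).mul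
    hpow).congr_deriv ?_
  have hrpow_sub : p ^ (l - 1) = p ^ l / p := by rw [Real.rpow_sub hp, Real.rpow_one]
  have hrpow_add : p ^ (l + 1) = p ^ l * p := by rw [Real.rpow_add hp, Real.rpow_one]
  rcases k with _ | k
  · simp only [nbPt_eq_nbCoeff_mul, nbCoeff_zero, if_true, hrpow_add, hrpow_sub, pow_zero]
    field_simp
    ring
  · have h₁ := mul_nbCoeff_add_one_eq_add_mul l (k + 1)
    have h₂ := mul_nbCoeff_add_one_eq_succ_mul l k
    simp only [nbPt_eq_nbCoeff_mul, Nat.succ_ne_zero, if_false, Nat.add_sub_cancel, hrpow_add,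
      hrpow_sub, pow_succ (1 - p)]
    push_cast at h₁ h₂ ⊢
    field_simp
    linear_combination (1 - p) ^ k * (h₂ - (1 - p) * h₁)

/-- Regarding `P(W₁ = k)` for `W₁ ~ nb(p, ℓ)` as a function of the mean `μ = ℓ(1−p)/p`
(so `p = ℓ/(μ+ℓ)`), its derivative in `μ` is `P(W₂ = k−1) − P(W₂ = k)` where
`W₂ ~ nb(p, ℓ+1)` (and `P(W₂ = −1) := 0`). -/
theorem stmt_7 (l : ℝ) (hl : 0 < l) (μ : ℝ) (hμ : 0 < μ) (k : ℕ) :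
    HasDerivAt (fun m : ℝ => nbPt l (l / (m + l)) k)
      ((if k = 0 then 0 else nbPt (l + 1) (l / (μ + l)) (k - 1))
        - nbPt (l + 1) (l / (μ + l)) k) μ := by
  have hμl : 0 < μ + l := by linarith
  have hprob : HasDerivAt (fun m : ℝ => l / (m + l)) (-(l / (μ + l) ^ 2)) μ := by
    simpa [div_eq_mul_inv] using (((hasDerivAt_id μ).add_const l).inv hμl.ne').const_mul l
  refine ((hasDerivAt_nbPt l (div_pos hl hμl) k).comp μ hprob).congr_deriv ?_
  field_simp
  ring
end

section
/- For the inverse Gaussian family IG(μ, λ) with fixed λ, define the signed log-likelihood at reference mean μ: g(x) = sign(x − μ)·(2·D(IG(x,λ) ‖ IG(μ,λ)))^(1/2) = λ^(1/2)·(x − μ)/(x^(1/2)·μ) for x > 0. Then the saddle-point approximation is exact: the density of IG(μ, λ) satisfies f(x) = φ(g(x)) / V(x)^(1/2), where φ is the standard Gaussian density and V(x) = x³/λ is the variance function. -/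
open Real

/-! Everything follows from `2·D = (√λ (x - μ) / (√x μ))²`: the signed root of this square
recovers its base because `sign t · |t| = t`, and `-g²/2` is then exactly the exponent of the
inverse Gaussian density, whose normalising constant splits as `(1 / √(2π)) / √(x³ / λ)`. -/

theorem Real.sign_mul_abs (r : ℝ) : sign r * |r| = r := by
  rcases lt_trichotomy r 0 with hr | rfl | hr
  · rw [sign_of_neg hr, abs_of_neg hr, neg_one_mul, neg_neg]
  · rw [sign_zero, zero_mul]
  · rw [sign_of_pos hr, abs_of_pos hr, one_mul]

theorem Real.sign_mul_sqrt_mul_sq {a : ℝ} (ha : 0 ≤ a) (b : ℝ) :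
    sign b * √(a * b ^ 2) = √a * b := by
  rw [sqrt_mul ha, sqrt_sq_eq_abs, mul_left_comm, sign_mul_abs]

theorem Real.sqrt_div_mul_eq_div_sqrt_div {a b : ℝ} (ha : 0 ≤ a) (hb : 0 ≤ b) (c : ℝ) :
    √(a / (b * c)) = 1 / √b / √(c / a) := by
  rw [sqrt_div ha, sqrt_mul hb, sqrt_div' c ha, div_div_eq_mul_div, one_div_mul_eq_div, div_div]

theorem sq_sqrt_mul_div_sqrt_mul {lam x : ℝ} (hlam : 0 ≤ lam) (hx : 0 ≤ x) (y μ : ℝ) :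
    (√lam * y / (√x * μ)) ^ 2 = lam * y ^ 2 / (x * μ ^ 2) := by
  rw [div_pow, mul_pow, mul_pow, sq_sqrt hlam, sq_sqrt hx]

/-- For the inverse Gaussian family `IG(μ, λ)`, the signed log-likelihood is
`g(x) = sign(x−μ)·(2·D(IG(x,λ)‖IG(μ,λ)))^{1/2} = λ^{1/2}(x−μ)/(x^{1/2}μ)`, and the
saddle-point approximation is exact: `f(x) = φ(g(x))/V(x)^{1/2}` with `V(x) = x³/λ`. -/
theorem stmt_16 (μ lam : ℝ) (hμ : 0 < μ) (hlam : 0 < lam) :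
    (∀ x : ℝ, 0 < x →
      Real.sign (x - μ) * Real.sqrt (2 * (lam * (x - μ) ^ 2 / (2 * x * μ ^ 2)))
        = Real.sqrt lam * (x - μ) / (Real.sqrt x * μ)) ∧
    (∀ x : ℝ, 0 < x →
      Real.sqrt (lam / (2 * π * x ^ 3)) * Real.exp (-(lam * (x - μ) ^ 2) / (2 * μ ^ 2 * x))
        = (Real.exp (-(Real.sqrt lam * (x - μ) / (Real.sqrt x * μ)) ^ 2 / 2) /
            Real.sqrt (2 * π)) / Real.sqrt (x ^ 3 / lam)) := by
  refine ⟨fun x hx => ?_, fun x hx => ?_⟩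
  · have hdev : 2 * (lam * (x - μ) ^ 2 / (2 * x * μ ^ 2)) = lam / (x * μ ^ 2) * (x - μ) ^ 2 := by
      field_simp
    rw [hdev, sign_mul_sqrt_mul_sq (by positivity), sqrt_div hlam.le, sqrt_mul hx.le,
      sqrt_sq hμ.le]
    ring
  · rw [sqrt_div_mul_eq_div_sqrt_div hlam.le (by positivity),
      sq_sqrt_mul_div_sqrt_mul hlam.le hx.le]
    have hexponent :
        -(lam * (x - μ) ^ 2) / (2 * μ ^ 2 * x) = -(lam * (x - μ) ^ 2 / (x * μ ^ 2)) / 2 := by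
      ring
    rw [hexponent]
    ring
end

section
/- Let W have the inverse Gaussian distribution IG(μ, λ) and let g(x) = λ^(1/2)(x − μ)/(x^(1/2)μ) be its signed log-likelihood transform. Then g(W) is stochastically dominated in the appropriate sense by a standard Gaussian: Φ(g(x)) ≤ P(W ≤ x) for all x ≥ 0, where Φ is the standard Gaussian CDF. A sufficient condition used in the proof: the density of g⁻¹(Z), for Z standard Gaussian, divided by the density of W, equals (x + μ)/(2μ), which is increasing in x. -/
/-!
Write `p` for the density of `IG(μ, λ)` and `q x = φ (g x) g' x` for the density of `g⁻¹(Z)`.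
Since `g` is an increasing bijection `(0, ∞) → ℝ`, substitution gives `Φ (g x) = ∫₀ˣ q`.
A direct computation gives `q = p · (x + μ) / (2μ)`, so `q ≤ p` on `(0, μ]` and `p ≤ q` on
`(μ, ∞)`. Both have total mass one, so for `x ≤ μ` the claim holds pointwise and for `x > μ`
it follows by comparing the tails beyond `x`. That `p` has mass one comes from the reflection
`t ↦ μ² / t`, which carries `p` to `(t / μ) p`, the other half of `2q = p + (t / μ) p`.
-/

open Real MeasureTheory

/-- Density of the inverse Gaussian distribution `IG(μ, λ)` on `(0, ∞)`. -/
noncomputable def igPdf (μ lam x : ℝ) : ℝ :=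
  Real.sqrt (lam / (2 * π * x ^ 3)) * Real.exp (-(lam * (x - μ) ^ 2) / (2 * μ ^ 2 * x))

/-- Signed log-likelihood transform of `IG(μ, λ)`. -/
noncomputable def igG (μ lam x : ℝ) : ℝ :=
  Real.sqrt lam * (x - μ) / (Real.sqrt x * μ)

open Filter Set Topology ProbabilityTheory

theorem setIntegral_Ioc_le_of_single_crossing {ν : Measure ℝ} {f g : ℝ → ℝ} {a c : ℝ}
    (hf : IntegrableOn f (Ioi a) ν) (hg : IntegrableOn g (Ioi a) ν)
    (hfg : ∫ t in Ioi a, g t ∂ν = ∫ t in Ioi a, f t ∂ν)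
    (hle : ∀ t ∈ Ioc a c, g t ≤ f t) (hge : ∀ t ∈ Ioi c, f t ≤ g t) (x : ℝ) :
    ∫ t in Ioc a x, g t ∂ν ≤ ∫ t in Ioc a x, f t ∂ν := by
  rcases le_or_gt x c with hxc | hcx
  · exact setIntegral_mono_on (hg.mono_set Ioc_subset_Ioi_self) (hf.mono_set Ioc_subset_Ioi_self)
      measurableSet_Ioc fun t ht => hle t ⟨ht.1, ht.2.trans hxc⟩
  rcases le_or_gt x a with hxa | hax
  · simp [Ioc_eq_empty_of_le hxa]
  have hsplit (h : ℝ → ℝ) (hh : IntegrableOn h (Ioi a) ν) :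
      ∫ t in Ioc a x, h t ∂ν + ∫ t in Ioi x, h t ∂ν = ∫ t in Ioi a, h t ∂ν := by
    rw [← setIntegral_union (Ioc_disjoint_Ioi le_rfl) measurableSet_Ioi
      (hh.mono_set Ioc_subset_Ioi_self) (hh.mono_set (Ioi_subset_Ioi hax.le)),
      Ioc_union_Ioi_eq_Ioi hax.le]
  have htail : ∫ t in Ioi x, f t ∂ν ≤ ∫ t in Ioi x, g t ∂ν :=
    setIntegral_mono_on (hf.mono_set (Ioi_subset_Ioi hax.le)) (hg.mono_set (Ioi_subset_Ioi hax.le))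
      measurableSet_Ioi fun t ht => hge t (hcx.trans ht)
  linarith [hsplit f hf, hsplit g hg]

theorem MonotoneOn.image_Ioc_eq_Iic_of_tendsto {f : ℝ → ℝ} {a x : ℝ}
    (hmono : MonotoneOn f (Ioi a)) (hcont : ContinuousOn f (Ioi a))
    (hbot : Tendsto f (𝓝[>] a) atBot) (hax : a < x) :
    f '' Ioc a x = Iic (f x) := by
  refine Subset.antisymm (image_subset_iff.2 fun t ht => hmono ht.1 hax ht.2) fun y hy => ?_
  obtain ⟨t₀, ht₀y, ht₀⟩ :=
    ((hbot.eventually (eventually_lt_atBot y)).and (Ioo_mem_nhdsGT hax)).exists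
  obtain ⟨t, ht, rfl⟩ := intermediate_value_Icc ht₀.2.le
    (hcont.mono fun t ht => ht₀.1.trans_le ht.1) ⟨ht₀y.le, hy⟩
  exact ⟨t, ⟨ht₀.1.trans_le ht.1, ht.2⟩, rfl⟩

theorem MonotoneOn.image_Ioi_eq_univ_of_tendsto {f : ℝ → ℝ} {a : ℝ}
    (hmono : MonotoneOn f (Ioi a)) (hcont : ContinuousOn f (Ioi a))
    (hbot : Tendsto f (𝓝[>] a) atBot) (htop : Tendsto f atTop atTop) :
    f '' Ioi a = univ := by
  refine eq_univ_of_forall fun y => ?_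
  obtain ⟨x, hyx, hax⟩ :=
    ((htop.eventually (eventually_ge_atTop y)).and (eventually_gt_atTop a)).exists
  have hy : y ∈ f '' Ioc a x := by
    rw [hmono.image_Ioc_eq_Iic_of_tendsto hcont hbot hax]
    exact hyx
  exact image_mono Ioc_subset_Ioi_self hy

theorem integral_comp_div_Ioi (f : ℝ → ℝ) {c : ℝ} (hc : 0 < c) :
    ∫ t in Ioi 0, c / t ^ 2 * f (c / t) = ∫ t in Ioi 0, f t := by
  have himage : (fun t => c / t) '' Ioi 0 = Ioi 0 :=
    Subset.antisymm (image_subset_iff.2 fun t ht => div_pos hc ht)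
      fun y hy => ⟨c / y, div_pos hc hy, div_div_cancel₀ hc.ne'⟩
  have hderiv (t : ℝ) (ht : t ∈ Ioi (0 : ℝ)) :
      HasDerivWithinAt (fun t => c / t) (-(c / t ^ 2)) (Ioi 0) t := by
    simpa [div_eq_mul_inv] using ((hasDerivAt_inv (ne_of_gt ht)).const_mul c).hasDerivWithinAt
  have hinj : InjOn (fun t => c / t) (Ioi 0) := fun s _ t _ hst => by
    simpa only [div_div_cancel₀ hc.ne'] using congrArg (c / ·) hst
  conv_rhs => rw [← himage, integral_image_eq_integral_abs_deriv_smul measurableSet_Ioi hderiv hinj]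
  refine setIntegral_congr_fun measurableSet_Ioi fun t ht => ?_
  rw [abs_neg, abs_of_pos (div_pos hc (pow_pos ht 2)), smul_eq_mul]

noncomputable def igGDeriv (μ lam x : ℝ) : ℝ :=
  Real.sqrt lam * (x + μ) / (2 * x ^ ((3 : ℝ) / 2) * μ)

-- The density `q` of `g⁻¹(Z)` for `Z ~ N(0, 1)`.
noncomputable def igPullbackPdf (μ lam x : ℝ) : ℝ :=
  gaussianPDFReal 0 1 (igG μ lam x) * igGDeriv μ lam x

theorem gaussianPDFReal_zero_one (s : ℝ) :
    gaussianPDFReal 0 1 s = Real.exp (-s ^ 2 / 2) / Real.sqrt (2 * π) := by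
  simp [gaussianPDFReal, div_eq_inv_mul]

theorem rpow_three_halves {x : ℝ} (hx : 0 ≤ x) : x ^ ((3 : ℝ) / 2) = x * Real.sqrt x := by
  rw [show (3 : ℝ) / 2 = 1 + 1 / 2 by norm_num, Real.rpow_add' hx (by norm_num), Real.rpow_one,
    Real.sqrt_eq_rpow]

section InverseGaussian

variable {μ lam x : ℝ}

theorem igPdf_pos (hlam : 0 < lam) (hx : 0 < x) : 0 < igPdf μ lam x := by
  unfold igPdf
  have : 0 < lam / (2 * π * x ^ 3) := by positivity
  positivity

theorem igPdf_eq_rpow (hlam : 0 ≤ lam) (hx : 0 ≤ x) :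
    igPdf μ lam x = Real.sqrt lam / (Real.sqrt (2 * π) * x ^ ((3 : ℝ) / 2)) *
      Real.exp (-(lam * (x - μ) ^ 2) / (2 * μ ^ 2 * x)) := by
  rw [igPdf, Real.sqrt_div hlam, Real.sqrt_mul (by positivity), rpow_three_halves hx,
    show x ^ 3 = x ^ 2 * x by ring, Real.sqrt_mul (sq_nonneg x), Real.sqrt_sq hx]

theorem igG_sq (hlam : 0 ≤ lam) (hx : 0 ≤ x) :
    igG μ lam x ^ 2 = lam * (x - μ) ^ 2 / (x * μ ^ 2) := by
  rw [igG, div_pow, mul_pow, mul_pow, Real.sq_sqrt hlam, Real.sq_sqrt hx]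

theorem igPullbackPdf_eq (hμ : 0 < μ) (hlam : 0 < lam) (hx : 0 < x) :
    igPullbackPdf μ lam x = igPdf μ lam x * ((x + μ) / (2 * μ)) := by
  rw [igPullbackPdf, igPdf_eq_rpow hlam.le hx.le, gaussianPDFReal_zero_one,
    igG_sq hlam.le hx.le, igGDeriv,
    show -(lam * (x - μ) ^ 2 / (x * μ ^ 2)) / 2 = -(lam * (x - μ) ^ 2) / (2 * μ ^ 2 * x) by
      field_simp]
  field_simp

theorem igGDeriv_pos (hμ : 0 < μ) (hlam : 0 < lam) (hx : 0 < x) : 0 < igGDeriv μ lam x := by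
  unfold igGDeriv
  have := Real.sqrt_pos.2 hlam
  positivity

theorem igG_eq_sub (hμ : μ ≠ 0) :
    igG μ lam = fun x => Real.sqrt lam / μ * Real.sqrt x - Real.sqrt lam * (Real.sqrt x)⁻¹ := by
  ext x
  rcases eq_or_ne (Real.sqrt x) 0 with hx | hx
  · simp [igG, hx]
  have hx' : Real.sqrt x ^ 2 = x := Real.sq_sqrt (Real.sqrt_ne_zero'.1 hx).le
  rw [igG]
  field_simp
  rw [hx']

theorem hasDerivAt_igG (hμ : μ ≠ 0) (hx : 0 < x) :
    HasDerivAt (igG μ lam) (igGDeriv μ lam x) x := by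
  have hs : 0 < Real.sqrt x := Real.sqrt_pos.2 hx
  have hsqrt := Real.hasDerivAt_sqrt hx.ne'
  rw [igG_eq_sub hμ]
  refine ((hsqrt.const_mul (Real.sqrt lam / μ)).sub
    ((hsqrt.inv hs.ne').const_mul (Real.sqrt lam))).congr_deriv ?_
  rw [igGDeriv, rpow_three_halves hx.le]
  field_simp
  rw [Real.sq_sqrt hx.le]
  ring

theorem strictMonoOn_igG (hμ : 0 < μ) (hlam : 0 < lam) : StrictMonoOn (igG μ lam) (Ioi 0) :=
  strictMonoOn_of_hasDerivWithinAt_pos (convex_Ioi 0)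
    (fun _ hx => (hasDerivAt_igG hμ.ne' hx).continuousAt.continuousWithinAt)
    (fun _ hx => (hasDerivAt_igG hμ.ne' (interior_subset hx)).hasDerivWithinAt)
    fun _ hx => igGDeriv_pos hμ hlam (interior_subset hx)

theorem continuousOn_igG (hμ : μ ≠ 0) : ContinuousOn (igG μ lam) (Ioi 0) :=
  fun _ hx => (hasDerivAt_igG hμ hx).continuousAt.continuousWithinAt

theorem tendsto_igG_nhdsGT_zero (hμ : μ ≠ 0) (hlam : 0 < lam) :
    Tendsto (igG μ lam) (𝓝[>] 0) atBot := by
  have hsqrt : Tendsto Real.sqrt (𝓝[>] 0) (𝓝[>] 0) :=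
    tendsto_nhdsWithin_of_tendsto_nhds_of_eventually_within _
      ((Real.continuous_sqrt.tendsto' 0 0 Real.sqrt_zero).mono_left nhdsWithin_le_nhds)
      (eventually_nhdsWithin_of_forall fun _ hx => Real.sqrt_pos.2 hx)
  rw [igG_eq_sub hμ]
  simp_rw [sub_eq_add_neg]
  refine Tendsto.add_atBot (C := Real.sqrt lam / μ * 0) ?_ ?_
  · exact ((Real.continuous_sqrt.tendsto' 0 0 Real.sqrt_zero).mono_left
      nhdsWithin_le_nhds).const_mul _
  · exact tendsto_neg_atTop_atBot.comp
      ((tendsto_inv_nhdsGT_zero.comp hsqrt).const_mul_atTop (Real.sqrt_pos.2 hlam))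

theorem tendsto_igG_atTop (hμ : 0 < μ) (hlam : 0 < lam) : Tendsto (igG μ lam) atTop atTop := by
  rw [igG_eq_sub hμ.ne']
  simp_rw [sub_eq_add_neg]
  refine Tendsto.atTop_add (C := -(Real.sqrt lam * 0)) ?_ ?_
  · exact tendsto_sqrt_atTop.const_mul_atTop (by positivity)
  · exact ((tendsto_inv_atTop_zero.comp tendsto_sqrt_atTop).const_mul _).neg

theorem igPullbackPdf_div_igPdf (hμ : 0 < μ) (hlam : 0 < lam) (hx : 0 < x) :
    igPullbackPdf μ lam x / igPdf μ lam x = (x + μ) / (2 * μ) := by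
  rw [igPullbackPdf_eq hμ hlam hx, mul_div_cancel_left₀ _ (igPdf_pos hlam hx).ne']

theorem igPullbackPdf_le_igPdf (hμ : 0 < μ) (hlam : 0 < lam) (hx : 0 < x) (hxμ : x ≤ μ) :
    igPullbackPdf μ lam x ≤ igPdf μ lam x := by
  rw [igPullbackPdf_eq hμ hlam hx]
  exact mul_le_of_le_one_right (igPdf_pos hlam hx).le
    ((div_le_one (by positivity)).2 (by linarith))

theorem igPdf_le_igPullbackPdf (hμ : 0 < μ) (hlam : 0 < lam) (hμx : μ ≤ x) :
    igPdf μ lam x ≤ igPullbackPdf μ lam x := by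
  have hx : 0 < x := hμ.trans_le hμx
  rw [igPullbackPdf_eq hμ hlam hx]
  exact le_mul_of_one_le_right (igPdf_pos hlam hx).le
    ((one_le_div (by positivity)).2 (by linarith))

theorem two_mul_igPullbackPdf (hμ : 0 < μ) (hlam : 0 < lam) (hx : 0 < x) :
    2 * igPullbackPdf μ lam x = igPdf μ lam x + x / μ * igPdf μ lam x := by
  rw [igPullbackPdf_eq hμ hlam hx]
  field_simp
  ring

theorem sq_div_sq_mul_igPdf_sq_div (hμ : 0 < μ) (hlam : 0 ≤ lam) (hx : 0 < x) :
    μ ^ 2 / x ^ 2 * igPdf μ lam (μ ^ 2 / x) = x / μ * igPdf μ lam x := by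
  rw [igPdf_eq_rpow hlam (by positivity), igPdf_eq_rpow hlam hx.le,
    rpow_three_halves (by positivity), rpow_three_halves hx.le, Real.sqrt_div (sq_nonneg μ),
    Real.sqrt_sq hμ.le,
    show -(lam * (μ ^ 2 / x - μ) ^ 2) / (2 * μ ^ 2 * (μ ^ 2 / x))
      = -(lam * (x - μ) ^ 2) / (2 * μ ^ 2 * x) by field_simp; ring]
  field_simp
  rw [Real.sq_sqrt hx.le]
  ring

theorem setIntegral_image_igG (hμ : 0 < μ) (hlam : 0 < lam) {s : Set ℝ} (hs : MeasurableSet s)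
    (hs₀ : s ⊆ Ioi 0) (φ : ℝ → ℝ) :
    ∫ y in igG μ lam '' s, φ y = ∫ t in s, φ (igG μ lam t) * igGDeriv μ lam t := by
  rw [integral_image_eq_integral_abs_deriv_smul hs
    (fun t ht => (hasDerivAt_igG hμ.ne' (hs₀ ht)).hasDerivWithinAt)
    ((strictMonoOn_igG hμ hlam).injOn.mono hs₀)]
  refine setIntegral_congr_fun hs fun t ht => ?_
  rw [abs_of_pos (igGDeriv_pos hμ hlam (hs₀ ht)), smul_eq_mul, mul_comm]

theorem image_Ioi_igG (hμ : 0 < μ) (hlam : 0 < lam) : igG μ lam '' Ioi 0 = univ :=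
  (strictMonoOn_igG hμ hlam).monotoneOn.image_Ioi_eq_univ_of_tendsto (continuousOn_igG hμ.ne')
    (tendsto_igG_nhdsGT_zero hμ.ne' hlam) (tendsto_igG_atTop hμ hlam)

theorem image_Ioc_igG (hμ : 0 < μ) (hlam : 0 < lam) (hx : 0 < x) :
    igG μ lam '' Ioc 0 x = Iic (igG μ lam x) :=
  (strictMonoOn_igG hμ hlam).monotoneOn.image_Ioc_eq_Iic_of_tendsto (continuousOn_igG hμ.ne')
    (tendsto_igG_nhdsGT_zero hμ.ne' hlam) hx

theorem integrableOn_igPullbackPdf (hμ : 0 < μ) (hlam : 0 < lam) :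
    IntegrableOn (igPullbackPdf μ lam) (Ioi 0) := by
  have h := (integrableOn_image_iff_integrableOn_abs_deriv_smul measurableSet_Ioi
    (fun t ht => (hasDerivAt_igG hμ.ne' ht).hasDerivWithinAt) (strictMonoOn_igG hμ hlam).injOn
    (gaussianPDFReal 0 1)).1
    (by rw [image_Ioi_igG hμ hlam, integrableOn_univ]; exact integrable_gaussianPDFReal 0 1)
  refine h.congr_fun (fun t ht => ?_) measurableSet_Ioi
  dsimp only
  rw [igPullbackPdf, abs_of_pos (igGDeriv_pos hμ hlam ht), smul_eq_mul, mul_comm]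

theorem integral_igPullbackPdf_Ioi (hμ : 0 < μ) (hlam : 0 < lam) :
    ∫ t in Ioi 0, igPullbackPdf μ lam t = 1 := by
  have h := setIntegral_image_igG hμ hlam measurableSet_Ioi subset_rfl (gaussianPDFReal 0 1)
  rw [image_Ioi_igG hμ hlam, setIntegral_univ, integral_gaussianPDFReal_eq_one 0 one_ne_zero] at h
  exact h.symm

theorem setIntegral_igPullbackPdf_Ioc (hμ : 0 < μ) (hlam : 0 < lam) (hx : 0 < x) :
    ∫ t in Ioc 0 x, igPullbackPdf μ lam t = ∫ y in Iic (igG μ lam x), gaussianPDFReal 0 1 y := by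
  rw [← image_Ioc_igG hμ hlam hx,
    setIntegral_image_igG hμ hlam measurableSet_Ioc Ioc_subset_Ioi_self]
  rfl

theorem integrableOn_igPdf (hμ : 0 < μ) (hlam : 0 < lam) : IntegrableOn (igPdf μ lam) (Ioi 0) := by
  refine ((integrableOn_igPullbackPdf hμ hlam).const_mul 2).mono' (by unfold igPdf; fun_prop)
    ((ae_restrict_iff' measurableSet_Ioi).2 (ae_of_all _ fun t (ht : 0 < t) => ?_))
  have hp := igPdf_pos (μ := μ) hlam ht
  have : 0 ≤ t / μ * igPdf μ lam t := by positivity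
  rw [Real.norm_of_nonneg hp.le, two_mul_igPullbackPdf hμ hlam ht]
  linarith

theorem integrableOn_div_mul_igPdf (hμ : 0 < μ) (hlam : 0 < lam) :
    IntegrableOn (fun t => t / μ * igPdf μ lam t) (Ioi 0) := by
  refine ((integrableOn_igPullbackPdf hμ hlam).const_mul 2).mono' (by unfold igPdf; fun_prop)
    ((ae_restrict_iff' measurableSet_Ioi).2 (ae_of_all _ fun t (ht : 0 < t) => ?_))
  have hp := igPdf_pos (μ := μ) hlam ht
  have : 0 ≤ t / μ * igPdf μ lam t := by positivity
  rw [Real.norm_of_nonneg this, two_mul_igPullbackPdf hμ hlam ht]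
  linarith

theorem integral_igPdf_Ioi (hμ : 0 < μ) (hlam : 0 < lam) : ∫ t in Ioi 0, igPdf μ lam t = 1 := by
  have hreflect : ∫ t in Ioi 0, t / μ * igPdf μ lam t = ∫ t in Ioi 0, igPdf μ lam t := by
    rw [← integral_comp_div_Ioi (igPdf μ lam) (pow_pos hμ 2)]
    exact setIntegral_congr_fun measurableSet_Ioi fun t ht =>
      (sq_div_sq_mul_igPdf_sq_div hμ hlam.le ht).symm
  have htwo : 2 * ∫ t in Ioi 0, igPullbackPdf μ lam t
      = (∫ t in Ioi 0, igPdf μ lam t) + ∫ t in Ioi 0, t / μ * igPdf μ lam t := by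
    rw [← integral_const_mul, ← integral_add (integrableOn_igPdf hμ hlam)
      (integrableOn_div_mul_igPdf hμ hlam)]
    exact setIntegral_congr_fun measurableSet_Ioi fun t ht => two_mul_igPullbackPdf hμ hlam ht
  rw [integral_igPullbackPdf_Ioi hμ hlam, hreflect] at htwo
  linarith

end InverseGaussian

/-- For `W ~ IG(μ, λ)`, `g(W)` is dominated by a standard Gaussian:
`Φ(g(x)) ≤ P(W ≤ x)` for all `x > 0`. A sufficient condition used in the proof:
the density of `g⁻¹(Z)` (namely `φ(g(x))·g'(x)` with
`g'(x) = λ^{1/2}(x+μ)/(2x^{3/2}μ)`) divided by the density of `W` equals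
`(x+μ)/(2μ)`, which is increasing in `x`. -/
theorem stmt_17 (μ lam : ℝ) (hμ : 0 < μ) (hlam : 0 < lam) :
    (∀ x : ℝ, 0 < x →
      (Real.exp (-(igG μ lam x) ^ 2 / 2) / Real.sqrt (2 * π) *
          (Real.sqrt lam * (x + μ) / (2 * x ^ ((3 : ℝ) / 2) * μ))) / igPdf μ lam x
        = (x + μ) / (2 * μ)) ∧
    (∀ x : ℝ, 0 < x →
      (∫ s in Set.Iic (igG μ lam x), Real.exp (-s ^ 2 / 2) / Real.sqrt (2 * π))
        ≤ ∫ t in Set.Ioc (0 : ℝ) x, igPdf μ lam t) := by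
  refine ⟨fun x hx => ?_, fun x hx => ?_⟩
  · rw [← gaussianPDFReal_zero_one]
    exact igPullbackPdf_div_igPdf hμ hlam hx
  · simp_rw [← gaussianPDFReal_zero_one]
    rw [← setIntegral_igPullbackPdf_Ioc hμ hlam hx]
    exact setIntegral_Ioc_le_of_single_crossing (integrableOn_igPdf hμ hlam)
      (integrableOn_igPullbackPdf hμ hlam)
      (by rw [integral_igPdf_Ioi hμ hlam, integral_igPullbackPdf_Ioi hμ hlam])
      (fun t ht => igPullbackPdf_le_igPdf hμ hlam ht.1 ht.2)
      (fun t ht => igPdf_le_igPullbackPdf hμ hlam ht.le) x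
end

section
/- Fix a nonnegative integer k and ℓ > 0, set p̂ = ℓ/(k+ℓ), and for p₀ ∈ (0,1) let D(p₀) = (k+ℓ)·(p̂·ln(p̂/p₀) + (1−p̂)·ln((1−p̂)/(1−p₀))) and G(p₀) = sign(p₀ − p̂)·(2D(p₀))^(1/2). Then the function p₀ ↦ (p₀ − p̂)/((1−p₀)·G(p₀)) is increasing on (0,1). A key step: the quantity (2D(p₀)/(k+ℓ))·(1−p̂) − (p₀−p̂)²/p₀ vanishes at p₀ = p̂ and its derivative in p₀ equals (p₀−p̂)²(1+p₀)/(p₀²(1−p₀)) ≥ 0, so it changes sign from − to + at p₀ = p̂. -/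
/-!
Write `c = k + ℓ`, `h = p̂` and `K = binKL h = D / c`. Away from `h` the function is the square
root of `sqRatio c h p = (p - h)² / ((1 - p)² · 2cK)`, and its value at `h` is the square root of
`h / ((1 - h) c)`. The derivative of `sqRatio` is `2c (1 - p) · (p - h) Q / (…)²` with
`Q = binKLGap h p = 2(1 - h) K - (p - h)² / p`; since `Q(h) = 0` and
`Q' = (p - h)²(1 + p) / (p²(1 - p))` vanishes only at `h`, `(p - h) Q > 0`, so `sqRatio` increases
on each side of `h`. Comparing `sqRatio` with the value at `h` amounts to the sign of
`R = binKLLimitGap h p = (p - h)²(1 - h) - 2h(1 - p)² K`, which also vanishes at `h` and has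
derivative `2(p - h)²/p + 4h(1 - p) K > 0` off `h`.
-/

open Real Set InformationTheory

noncomputable def binKL (h p : ℝ) : ℝ :=
  h * log (h / p) + (1 - h) * log ((1 - h) / (1 - p))

lemma binKL_self (h : ℝ) : binKL h h = 0 := by simp [binKL]

lemma sub_lt_mul_log_div {a b : ℝ} (ha : 0 ≤ a) (hb : 0 < b) (hab : a ≠ b) :
    a - b < a * log (a / b) := by
  have hr : 0 ≤ a / b := div_nonneg ha hb.le
  have hkl : 0 < klFun (a / b) :=
    (klFun_nonneg hr).lt_of_ne' fun h0 =>
      hab ((div_eq_one_iff_eq hb.ne').mp ((klFun_eq_zero_iff hr).mp h0))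
  have key : a * log (a / b) - (a - b) = b * klFun (a / b) := by
    rw [klFun_apply]; field_simp; ring
  linarith [mul_pos hb hkl]

lemma binKL_pos {h p : ℝ} (hh0 : 0 ≤ h) (hh1 : h ≤ 1) (hp : p ∈ Ioo 0 1) (hph : p ≠ h) :
    0 < binKL h p := by
  have h₁ := sub_lt_mul_log_div hh0 hp.1 hph.symm
  have h₂ := sub_lt_mul_log_div (sub_nonneg.2 hh1) (sub_pos.2 hp.2) (by contrapose! hph; linarith)
  unfold binKL
  linarith

lemma hasDerivAt_mul_log_div (a : ℝ) {x : ℝ} (hx : x ≠ 0) :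
    HasDerivAt (fun y => a * log (a / y)) (-a / x) x := by
  rcases eq_or_ne a 0 with rfl | ha
  · simpa using hasDerivAt_const x (0 : ℝ)
  refine ((((hasDerivAt_inv hx).const_mul a).log (div_ne_zero ha hx)).const_mul a).congr_deriv ?_
  field_simp

lemma hasDerivAt_binKL (h : ℝ) {p : ℝ} (hp0 : p ≠ 0) (hp1 : p ≠ 1) :
    HasDerivAt (binKL h) ((p - h) / (p * (1 - p))) p := by
  have h₂ := (hasDerivAt_mul_log_div (1 - h) (sub_ne_zero.2 hp1.symm)).comp p
    ((hasDerivAt_id p).const_sub 1)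
  refine ((hasDerivAt_mul_log_div h hp0).add h₂).congr_deriv ?_
  have : 1 - p ≠ 0 := sub_ne_zero.2 hp1.symm
  field_simp
  ring

lemma lt_of_hasDerivAt_pos {f f' : ℝ → ℝ} {x y : ℝ} (hxy : x < y)
    (hf : ∀ z ∈ Icc x y, HasDerivAt f (f' z) z) (hpos : ∀ z ∈ Ioo x y, 0 < f' z) : f x < f y := by
  refine strictMonoOn_of_hasDerivWithinAt_pos (f' := f') (convex_Icc x y)
    (fun z hz => (hf z hz).continuousAt.continuousWithinAt) (fun z hz => ?_) (fun z hz => ?_)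
    (left_mem_Icc.2 hxy.le) (right_mem_Icc.2 hxy.le) hxy
  · rw [interior_Icc] at hz ⊢
    exact (hf z (Ioo_subset_Icc_self hz)).hasDerivWithinAt
  · rw [interior_Icc] at hz
    exact hpos z hz

lemma strictMonoOn_of_hasDerivAt_pos_of_ne {f f' : ℝ → ℝ} {s : Set ℝ} [s.OrdConnected] (c : ℝ)
    (hf : ∀ x ∈ s, HasDerivAt f (f' x) x) (hpos : ∀ x ∈ s, x ≠ c → 0 < f' x) :
    StrictMonoOn f s := by
  intro x hx y hy hxy
  have hsub : Icc x y ⊆ s := Set.OrdConnected.out ‹_› hx hy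
  have step : ∀ u v, x ≤ u → u < v → v ≤ y → c ∉ Ioo u v → f u < f v :=
    fun u v hxu huv hvy hc => lt_of_hasDerivAt_pos huv
      (fun z hz => hf z (hsub ⟨hxu.trans hz.1, hz.2.trans hvy⟩))
      (fun z hz => hpos z (hsub ⟨hxu.trans hz.1.le, hz.2.le.trans hvy⟩) fun e => hc (e ▸ hz))
  by_cases hc : c ∈ Ioo x y
  · exact (step x c le_rfl hc.1 hc.2.le (fun h => h.2.false)).trans
      (step c y hc.1.le hc.2 le_rfl (fun h => h.1.false))
  · exact step x y le_rfl hxy le_rfl hc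

lemma strictMonoOn_of_Iio_Ioi {α β : Type*} [LinearOrder α] [Preorder β] {f : α → β}
    {s : Set α} [s.OrdConnected] {c : α}
    (hl : StrictMonoOn f (s ∩ Iio c)) (hr : StrictMonoOn f (s ∩ Ioi c))
    (hlc : c ∈ s → ∀ x ∈ s, x < c → f x < f c) (hcr : c ∈ s → ∀ y ∈ s, c < y → f c < f y) :
    StrictMonoOn f s := by
  intro x hx y hy hxy
  rcases lt_trichotomy x c with hxc | rfl | hcx
  · rcases lt_trichotomy y c with hyc | rfl | hcy
    · exact hl ⟨hx, hxc⟩ ⟨hy, hyc⟩ hxy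
    · exact hlc hy x hx hxc
    · have hc : c ∈ s := Set.OrdConnected.out ‹_› hx hy ⟨hxc.le, hcy.le⟩
      exact (hlc hc x hx hxc).trans (hcr hc y hy hcy)
  · exact hcr hx y hy hxy
  · exact hr ⟨hx, hcx⟩ ⟨hy, hcx.trans hxy⟩ hxy

noncomputable def binKLGap (h p : ℝ) : ℝ := 2 * binKL h p * (1 - h) - (p - h) ^ 2 / p

lemma binKLGap_self (h : ℝ) : binKLGap h h = 0 := by simp [binKLGap, binKL_self]

lemma hasDerivAt_binKLGap (h : ℝ) {p : ℝ} (hp0 : p ≠ 0) (hp1 : p ≠ 1) :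
    HasDerivAt (binKLGap h) ((p - h) ^ 2 * (1 + p) / (p ^ 2 * (1 - p))) p := by
  have hquad := (((hasDerivAt_id p).sub_const h).pow 2).div (hasDerivAt_id p) hp0
  refine ((((hasDerivAt_binKL h hp0 hp1).const_mul 2).mul_const (1 - h)).sub hquad).congr_deriv ?_
  have : 1 - p ≠ 0 := sub_ne_zero.2 hp1.symm
  simp only [id, Pi.pow_apply]
  field_simp
  ring

lemma mul_binKLGap_pos {h p : ℝ} (hh0 : 0 < h) (hh1 : h ≤ 1) (hp : p ∈ Ioo 0 1) (hph : p ≠ h) :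
    0 < (p - h) * binKLGap h p := by
  have hmono : StrictMonoOn (binKLGap h) (Ioo 0 1) :=
    strictMonoOn_of_hasDerivAt_pos_of_ne h (fun x hx => hasDerivAt_binKLGap h hx.1.ne' hx.2.ne)
      fun x hx hxh => by
        have : 0 < 1 - x := sub_pos.2 hx.2
        have : 0 < (x - h) ^ 2 := pow_two_pos_of_ne_zero (sub_ne_zero.2 hxh)
        have := hx.1
        positivity
  rcases hph.lt_or_gt with hph | hph
  · refine mul_pos_of_neg_of_neg (sub_neg.2 hph) ?_
    -- for `h = 1` the comparison point lies outside `Ioo 0 1`, but then `Q = -(p - 1)² / p`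
    rcases hh1.lt_or_eq with hh1 | rfl
    · simpa [binKLGap_self] using hmono hp ⟨hp.1.trans hph, hh1⟩ hph
    · have := hp.1
      simp only [binKLGap, sub_self, mul_zero, zero_sub, neg_lt_zero]
      positivity
  · refine mul_pos (sub_pos.2 hph) ?_
    simpa [binKLGap_self] using hmono ⟨hh0, hph.trans hp.2⟩ hp hph

noncomputable def binKLLimitGap (h p : ℝ) : ℝ :=
  (p - h) ^ 2 * (1 - h) - 2 * h * (1 - p) ^ 2 * binKL h p

lemma binKLLimitGap_self (h : ℝ) : binKLLimitGap h h = 0 := by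
  simp [binKLLimitGap, binKL_self]

lemma hasDerivAt_binKLLimitGap (h : ℝ) {p : ℝ} (hp0 : p ≠ 0) (hp1 : p ≠ 1) :
    HasDerivAt (binKLLimitGap h)
      (2 * (p - h) ^ 2 / p + 4 * h * (1 - p) * binKL h p) p := by
  have hquad := (((hasDerivAt_id p).sub_const h).pow 2).mul_const (1 - h)
  have hweight := (((hasDerivAt_id p).const_sub 1).pow 2).const_mul (2 * h)
  refine (hquad.sub (hweight.mul (hasDerivAt_binKL h hp0 hp1))).congr_deriv ?_
  have : 1 - p ≠ 0 := sub_ne_zero.2 hp1.symm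
  simp only [id, Pi.pow_apply]
  field_simp
  ring

lemma mul_binKLLimitGap_pos {h p : ℝ} (hh : h ∈ Ioo 0 1) (hp : p ∈ Ioo 0 1) (hph : p ≠ h) :
    0 < (p - h) * binKLLimitGap h p := by
  have hmono : StrictMonoOn (binKLLimitGap h) (Ioo 0 1) :=
    strictMonoOn_of_hasDerivAt_pos_of_ne h
      (fun x hx => hasDerivAt_binKLLimitGap h hx.1.ne' hx.2.ne) fun x hx hxh => by
        have : 0 < (x - h) ^ 2 := pow_two_pos_of_ne_zero (sub_ne_zero.2 hxh)
        have := binKL_pos hh.1.le hh.2.le hx hxh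
        have := hx.1
        have : 0 < 1 - x := sub_pos.2 hx.2
        have := hh.1
        positivity
  rcases hph.lt_or_gt with hph | hph
  · refine mul_pos_of_neg_of_neg (sub_neg.2 hph) ?_
    simpa [binKLLimitGap_self] using hmono hp hh hph
  · refine mul_pos (sub_pos.2 hph) ?_
    simpa [binKLLimitGap_self] using hmono hh hp hph

noncomputable def sqRatio (c h p : ℝ) : ℝ := (p - h) ^ 2 / ((1 - p) ^ 2 * (2 * (c * binKL h p)))

lemma hasDerivAt_sqRatio {c h p : ℝ} (hc : c ≠ 0) (hp0 : p ≠ 0) (hp1 : p ≠ 1)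
    (hK : binKL h p ≠ 0) :
    HasDerivAt (sqRatio c h)
      (2 * c * (1 - p) * ((p - h) * binKLGap h p) / ((1 - p) ^ 2 * (2 * (c * binKL h p))) ^ 2)
      p := by
  have h1p : 1 - p ≠ 0 := sub_ne_zero.2 hp1.symm
  have hquad := ((hasDerivAt_id p).sub_const h).pow 2
  have hden := (((hasDerivAt_id p).const_sub 1).pow 2).mul
    (((hasDerivAt_binKL h hp0 hp1).const_mul c).const_mul 2)
  refine (hquad.div hden (by simp [h1p, hc, hK])).congr_deriv ?_
  simp only [id, Pi.pow_apply, Pi.mul_apply, binKLGap]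
  field_simp
  ring

lemma mul_sqRatio_sub_limit_pos {c h p : ℝ} (hc : 0 < c) (hh : h ∈ Ioo 0 1) (hp : p ∈ Ioo 0 1)
    (hph : p ≠ h) : 0 < (p - h) * (sqRatio c h p - h / ((1 - h) * c)) := by
  have hK := binKL_pos hh.1.le hh.2.le hp hph
  have h1p : 0 < 1 - p := sub_pos.2 hp.2
  have h1h : 0 < 1 - h := sub_pos.2 hh.2
  have hdiff : sqRatio c h p - h / ((1 - h) * c) =
      binKLLimitGap h p / ((1 - h) * c * (1 - p) ^ 2 * (2 * binKL h p)) := by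
    unfold sqRatio binKLLimitGap
    field_simp
  rw [hdiff, ← mul_div_assoc]
  exact div_pos (mul_binKLLimitGap_pos hh hp hph) (by positivity)

lemma strictMonoOn_sqRatio {c h : ℝ} (hc : 0 < c) (hh0 : 0 < h) (hh1 : h ≤ 1) {s : Set ℝ}
    [s.OrdConnected] (hs : s ⊆ Ioo 0 1) (hhs : h ∉ s) : StrictMonoOn (sqRatio c h) s := by
  refine strictMonoOn_of_hasDerivAt_pos_of_ne (f' := fun p =>
      2 * c * (1 - p) * ((p - h) * binKLGap h p) / ((1 - p) ^ 2 * (2 * (c * binKL h p))) ^ 2)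
    h (fun p hp => ?_) fun p hp hph => ?_
  · have hp' := hs hp
    exact hasDerivAt_sqRatio hc.ne' hp'.1.ne' hp'.2.ne
      (binKL_pos hh0.le hh1 hp' (ne_of_mem_of_not_mem hp hhs)).ne'
  · have hp' := hs hp
    have := mul_binKLGap_pos hh0 hh1 hp' hph
    have := binKL_pos hh0.le hh1 hp' hph
    have : 0 < 1 - p := sub_pos.2 hp'.2
    positivity

lemma strictMonoOn_sqRatio_ite {c h : ℝ} (hc : 0 < c) (hh0 : 0 < h) (hh1 : h ≤ 1) :
    StrictMonoOn (fun p => if p = h then h / ((1 - h) * c) else sqRatio c h p) (Ioo 0 1) := by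
  have side : ∀ t : Set ℝ, [t.OrdConnected] → h ∉ t →
      StrictMonoOn (fun p => if p = h then h / ((1 - h) * c) else sqRatio c h p) (Ioo 0 1 ∩ t) :=
    fun t _ hht => (strictMonoOn_sqRatio hc hh0 hh1 inter_subset_left (fun hh => hht hh.2)).congr
      fun p hp => (if_neg (ne_of_mem_of_not_mem hp.2 hht)).symm
  refine strictMonoOn_of_Iio_Ioi (side _ (lt_irrefl h)) (side _ (lt_irrefl h))
    (fun hh p hp hph => ?_) (fun hh p hp hph => ?_)
  · have := mul_sqRatio_sub_limit_pos hc hh hp hph.ne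
    simp only [if_pos, if_neg hph.ne]
    exact sub_neg.1 (neg_of_mul_pos_right this (sub_neg.2 hph).le)
  · have := mul_sqRatio_sub_limit_pos hc hh hp hph.ne'
    simp only [if_pos, if_neg hph.ne']
    exact sub_pos.1 (pos_of_mul_pos_right this (sub_pos.2 hph).le)

lemma div_mul_sign_sqrt_eq_sqrt_sqRatio {c h p : ℝ} (hp1 : p < 1) (hph : p ≠ h) :
    (p - h) / ((1 - p) * (Real.sign (p - h) * √(2 * (c * binKL h p)))) = √(sqRatio c h p) := by
  rw [sqRatio, sqrt_div (sq_nonneg _), sqrt_mul (sq_nonneg _), sqrt_sq (sub_pos.2 hp1).le,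
    sqrt_sq_eq_abs]
  rcases hph.lt_or_gt with hph | hph
  · rw [Real.sign_of_neg (sub_neg.2 hph), abs_of_neg (sub_neg.2 hph), neg_one_mul, mul_neg,
      div_neg, neg_div]
  · rw [Real.sign_of_pos (sub_pos.2 hph), abs_of_pos (sub_pos.2 hph), one_mul]

lemma strictMonoOn_ratio {c h : ℝ} (hc : 0 < c) (hh0 : 0 < h) (hh1 : h ≤ 1) :
    StrictMonoOn (fun p => if p = h then √(h / ((1 - h) * c))
      else (p - h) / ((1 - p) * (Real.sign (p - h) * √(2 * (c * binKL h p))))) (Ioo 0 1) := by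
  have hsqrt : StrictMonoOn (fun p => √(if p = h then h / ((1 - h) * c) else sqRatio c h p))
      (Ioo 0 1) := fun x hx y hy hxy =>
    sqrt_lt_sqrt ?_ (strictMonoOn_sqRatio_ite hc hh0 hh1 hx hy hxy)
  · refine hsqrt.congr fun p hp => ?_
    by_cases hph : p = h
    · simp only [if_pos hph]
    · simp only [if_neg hph]
      exact (div_mul_sign_sqrt_eq_sqrt_sqRatio hp.2 hph).symm
  · split_ifs with hxh
    · exact div_nonneg hh0.le (mul_nonneg (sub_nonneg.2 hh1) hc.le)
    · have := binKL_pos hh0.le hh1 hx hxh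
      have : 0 < 1 - x := sub_pos.2 hx.2
      unfold sqRatio
      positivity

/-- With `p̂ = ℓ/(k+ℓ)`, `D(p₀) = (k+ℓ)(p̂ ln(p̂/p₀) + (1−p̂) ln((1−p̂)/(1−p₀)))` and
`G(p₀) = sign(p₀−p̂)·(2D(p₀))^{1/2}`, the function `p₀ ↦ (p₀−p̂)/((1−p₀)G(p₀))`
(extended by its limit at `p₀ = p̂`) is increasing on `(0,1)`. Key step: the quantity
`(2D(p₀)/(k+ℓ))(1−p̂) − (p₀−p̂)²/p₀` vanishes at `p₀ = p̂` and has derivative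
`(p₀−p̂)²(1+p₀)/(p₀²(1−p₀)) ≥ 0`, so it changes sign from − to + at `p̂`. -/
theorem stmt_18 (k : ℕ) (l : ℝ) (hl : 0 < l) :
    let phat : ℝ := l / (k + l)
    let D : ℝ → ℝ := fun p₀ =>
      ((k : ℝ) + l) * (phat * Real.log (phat / p₀) +
        (1 - phat) * Real.log ((1 - phat) / (1 - p₀)))
    let G : ℝ → ℝ := fun p₀ => Real.sign (p₀ - phat) * Real.sqrt (2 * D p₀)
    StrictMonoOn
      (fun p₀ => if p₀ = phat then Real.sqrt (phat / ((1 - phat) * ((k : ℝ) + l)))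
        else (p₀ - phat) / ((1 - p₀) * G p₀)) (Set.Ioo 0 1) ∧
    2 * D phat / ((k : ℝ) + l) * (1 - phat) - (phat - phat) ^ 2 / phat = 0 ∧
    ∀ p₀ ∈ Set.Ioo (0 : ℝ) 1,
      HasDerivAt (fun q => 2 * D q / ((k : ℝ) + l) * (1 - phat) - (q - phat) ^ 2 / q)
        ((p₀ - phat) ^ 2 * (1 + p₀) / (p₀ ^ 2 * (1 - p₀))) p₀ := by
  intro phat D G
  have hc : (0 : ℝ) < k + l := by positivity
  have hh0 : 0 < phat := div_pos hl hc
  have hh1 : phat ≤ 1 := div_le_one_of_le₀ (by simp) hc.le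
  have hgap : ∀ q, 2 * D q / (k + l) * (1 - phat) - (q - phat) ^ 2 / q = binKLGap phat q :=
    fun q => by rw [binKLGap, mul_div_assoc, mul_div_cancel_left₀ _ hc.ne']; rfl
  exact ⟨strictMonoOn_ratio hc hh0 hh1, by rw [hgap, binKLGap_self],
    fun p hp => by simpa only [hgap] using hasDerivAt_binKLGap phat hp.1.ne' hp.2.ne⟩
end
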